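/- arXiv:2512.00788 — 2 statements merged into one kernel-verified Lean document; each statement's English description precedes it below -/
import Mathlib

section
/- Fix N ≥ 3, let H_C be the MCS charger Hamiltonian on N+1 qubits, and let φ be the product state |+z⟩₀ ⊗ |+x⟩^{⊗N}, i.e. the unit vector φ f = if f 0 = 0 then (2:ℂ)^(-(N:ℝ)/2) else 0. Then star φ ⬝ᵥ (H_C.mulVec φ) = 0 and star φ ⬝ᵥ ((H_C * H_C).mulVec φ) = N^2 + N, so the energy variance of H_C in the state φ equals N² + N and scales quadratically with system size. -/
open scoped Matrix.Norms.L2Operator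
open scoped Matrix

/-- The 2×2 matrix `P` acting on site `j` of a chain of `N+1` qubits
(identity elsewhere): `P⁽ʲ⁾ f g = P (f j) (g j) * ∏_{k ≠ j} δ_{f k, g k}`. -/
def siteOp {N : ℕ} (P : Matrix (Fin 2) (Fin 2) ℂ) (j : Fin (N + 1)) :
    Matrix (Fin (N + 1) → Fin 2) (Fin (N + 1) → Fin 2) ℂ :=
  fun f g => P (f j) (g j) * ∏ k ∈ Finset.univ.erase j, (if f k = g k then (1 : ℂ) else 0)

/-- Pauli X. -/
def σx : Matrix (Fin 2) (Fin 2) ℂ := !![0, 1; 1, 0]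
/-- Pauli Y. -/
def σy : Matrix (Fin 2) (Fin 2) ℂ := !![0, -Complex.I; Complex.I, 0]
/-- Pauli Z. -/
def σz : Matrix (Fin 2) (Fin 2) ℂ := !![1, 0; 0, -1]

/-- The peripheral site labelled `i+1` (site `0` is the central spin). -/
def per {N : ℕ} (i : Fin N) : Fin (N + 1) := i.succ

/-- The cyclic successor `i ⊕ 1` among the peripheral sites `{1, …, N}`. -/
def perS {N : ℕ} (i : Fin N) : Fin (N + 1) :=
  ⟨(i.1 + 1) % N + 1, Nat.succ_lt_succ (Nat.mod_lt _ i.pos)⟩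
/-- The cyclic predecessor `i ⊖ 1` among the peripheral sites `{1, …, N}`. -/
def perP {N : ℕ} (i : Fin N) : Fin (N + 1) :=
  ⟨(i.1 + (N - 1)) % N + 1, Nat.succ_lt_succ (Nat.mod_lt _ i.pos)⟩

/-- The modified central-spin (MCS) battery Hamiltonian
`H_B = ∑_{i=1}^N σx⁽⁰⁾ σx⁽ⁱ⁾ + ∑_{i=1}^N σz⁽ⁱ⁾ σz⁽ⁱ⊕¹⁾` on `N+1` qubits (PBC). -/
noncomputable def HB (N : ℕ) :
    Matrix (Fin (N + 1) → Fin 2) (Fin (N + 1) → Fin 2) ℂ :=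
  (∑ i : Fin N, siteOp σx 0 * siteOp σx (per i)) +
  (∑ i : Fin N, siteOp σz (per i) * siteOp σz (perS i))

/-- The modified central-spin (MCS) charger Hamiltonian
`H_C = ∑_{i=1}^N σy⁽⁰⁾ σx⁽ⁱ⁾ + ∑_{i=1}^N σz⁽ⁱ⁾ σz⁽ⁱ⊕¹⁾` on `N+1` qubits (PBC). -/
noncomputable def HC (N : ℕ) :
    Matrix (Fin (N + 1) → Fin 2) (Fin (N + 1) → Fin 2) ℂ :=
  (∑ i : Fin N, siteOp σy 0 * siteOp σx (per i)) +
  (∑ i : Fin N, siteOp σz (per i) * siteOp σz (perS i))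

/-- The product state `|+z⟩₀ ⊗ |+x⟩^{⊗N}`: the unit vector
`φ f = if f 0 = 0 then 2^{-N/2} else 0`. -/
noncomputable def φprod (N : ℕ) : (Fin (N + 1) → Fin 2) → ℂ :=
  fun f => if f 0 = 0 then (((2 : ℝ) ^ (-(N : ℝ) / 2) : ℝ) : ℂ) else 0


/-!
Every term of `H_C` is a tensor product of single-site operators, so its expectation in the
product state `φ = |0⟩ ⊗ |+⟩^{⊗N}` factorises into single-site expectations: at the centre `σy`
averages to `0`, at the peripheral sites `σz` averages to `0` and `σx` to `1`. Hence `⟨H_C⟩ = 0`.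
Expanding `H_C²` into products of two terms, the `N²` products of central couplings
`σy⁽⁰⁾σx⁽ⁱ⁾ σy⁽⁰⁾σx⁽ʲ⁾ = σx⁽ⁱ⁾σx⁽ʲ⁾` average to `1`, the mixed products leave a lone `σy⁽⁰⁾`,
and a product of two distinct ring couplings leaves a lone `σz` on some peripheral site, because
for `N ≥ 3` two distinct bonds of the ring never join the same pair of sites. This leaves `N² + N`.
-/

namespace Matrix

variable {ι l m n R : Type*} [Fintype ι]

def piKronecker [CommMonoid R] (M : ι → Matrix m n R) : Matrix (ι → m) (ι → n) R :=
  of fun f g => ∏ k, M k (f k) (g k)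

theorem piKronecker_mul [CommSemiring R] [DecidableEq ι] [Fintype m] (M : ι → Matrix l m R)
    (M' : ι → Matrix m n R) :
    piKronecker M * piKronecker M' = piKronecker fun k => M k * M' k := by
  ext f h
  simp only [mul_apply, piKronecker, of_apply, Fintype.prod_sum, Finset.prod_mul_distrib]

end Matrix

open Matrix

def prodVec {ι n R : Type*} [Fintype ι] [CommMonoid R] (v : ι → n → R) : (ι → n) → R :=
  fun f => ∏ k, v k (f k)

theorem star_prodVec {ι n R : Type*} [Fintype ι] [CommMonoid R] [StarMul R]
    (v : ι → n → R) : star (prodVec v) = prodVec (star v) := by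
  ext f
  simp [prodVec, star_prod]

section

variable {ι m n R : Type*} [Fintype ι] [DecidableEq ι] [Fintype n] [CommSemiring R]

theorem piKronecker_mulVec_prodVec (M : ι → Matrix m n R) (v : ι → n → R) :
    piKronecker M *ᵥ prodVec v = prodVec fun k => M k *ᵥ v k := by
  ext f
  simp only [mulVec, dotProduct, piKronecker, of_apply, prodVec, Fintype.prod_sum,
    Finset.prod_mul_distrib]

theorem prodVec_dotProduct_prodVec (u v : ι → n → R) :
    prodVec u ⬝ᵥ prodVec v = ∏ k, u k ⬝ᵥ v k := by
  simp only [dotProduct, prodVec, Fintype.prod_sum, Finset.prod_mul_distrib]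

end

section

variable {n R : Type*} [Fintype n]

def expectation [NonUnitalNonAssocSemiring R] [Star R] (v : n → R) (A : Matrix n n R) : R :=
  star v ⬝ᵥ A *ᵥ v

variable [CommSemiring R] [StarRing R]

theorem expectation_add (v : n → R) (A B : Matrix n n R) :
    expectation v (A + B) = expectation v A + expectation v B := by
  simp only [expectation, add_mulVec, dotProduct_add]

theorem expectation_sum {κ : Type*} (v : n → R) (s : Finset κ) (A : κ → Matrix n n R) :
    expectation v (∑ i ∈ s, A i) = ∑ i ∈ s, expectation v (A i) := by
  simp only [expectation, sum_mulVec, dotProduct_sum]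

theorem expectation_prodVec_piKronecker {ι : Type*} [Fintype ι] [DecidableEq ι]
    (v : ι → n → R) (M : ι → Matrix n n R) :
    expectation (prodVec v) (piKronecker M) = ∏ k, expectation (v k) (M k) := by
  rw [expectation, star_prodVec, piKronecker_mulVec_prodVec, prodVec_dotProduct_prodVec]
  rfl

end

theorem siteOp_eq_piKronecker {N : ℕ} (P : Matrix (Fin 2) (Fin 2) ℂ) (j : Fin (N + 1)) :
    siteOp P j = piKronecker (Pi.mulSingle j P) := by
  ext f g
  rw [siteOp, piKronecker, of_apply, ← Finset.mul_prod_erase _ _ (Finset.mem_univ j)]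
  congr 1
  · simp
  · refine Finset.prod_congr rfl fun k hk => ?_
    simp [Pi.mulSingle_eq_of_ne (Finset.ne_of_mem_erase hk), one_apply]

@[simp] theorem σx_mul_σx : σx * σx = 1 := by
  ext i j; fin_cases i <;> fin_cases j <;> simp [σx]

@[simp] theorem σy_mul_σy : σy * σy = 1 := by
  ext i j; fin_cases i <;> fin_cases j <;> simp [σy]

@[simp] theorem σz_mul_σz : σz * σz = 1 := by
  ext i j; fin_cases i <;> fin_cases j <;> simp [σz]

def ketZero : Fin 2 → ℂ := Pi.single 0 1

noncomputable def ketPlus : Fin 2 → ℂ := fun _ => (((2 : ℝ) ^ (-(1 : ℝ) / 2) : ℝ) : ℂ)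

theorem expectation_ketZero (M : Matrix (Fin 2) (Fin 2) ℂ) :
    expectation ketZero M = M 0 0 := by
  simp [expectation, ketZero]

theorem expectation_ketPlus (M : Matrix (Fin 2) (Fin 2) ℂ) :
    expectation ketPlus M = (M 0 0 + M 0 1 + M 1 0 + M 1 1) / 2 := by
  have hamp : (((2 : ℝ) ^ (-(1 : ℝ) / 2) : ℝ) : ℂ) * (((2 : ℝ) ^ (-(1 : ℝ) / 2) : ℝ) : ℂ) =
      1 / 2 := by
    rw [← Complex.ofReal_mul, ← Real.rpow_add two_pos]
    norm_num
  simp only [expectation, ketPlus, dotProduct, mulVec, Fin.sum_univ_two, Pi.star_apply,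
    Complex.star_def, Complex.conj_ofReal]
  linear_combination (M 0 0 + M 0 1 + M 1 0 + M 1 1) * hamp

@[simp] theorem expectation_ketZero_one : expectation ketZero 1 = 1 := by
  simp [expectation_ketZero]

@[simp] theorem expectation_ketZero_σy : expectation ketZero σy = 0 := by
  simp [expectation_ketZero, σy]

@[simp] theorem expectation_ketPlus_one : expectation ketPlus 1 = 1 := by
  simp [expectation_ketPlus]

@[simp] theorem expectation_ketPlus_σx : expectation ketPlus σx = 1 := by
  simp [expectation_ketPlus, σx]

@[simp] theorem expectation_ketPlus_σz : expectation ketPlus σz = 0 := by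
  simp [expectation_ketPlus, σz]

noncomputable def siteState (N : ℕ) : Fin (N + 1) → Fin 2 → ℂ :=
  Function.update (fun _ => ketPlus) 0 ketZero

theorem φprod_eq_prodVec (N : ℕ) : φprod N = prodVec (siteState N) := by
  have hpow : (((2 : ℝ) ^ (-(1 : ℝ) / 2) : ℝ) : ℂ) ^ N =
      (((2 : ℝ) ^ (-(N : ℝ) / 2) : ℝ) : ℂ) := by
    rw [← Complex.ofReal_pow, ← Real.rpow_natCast, ← Real.rpow_mul zero_le_two]
    ring_nf
  ext f
  simp [prodVec, Fin.prod_univ_succ, siteState, ketPlus, ketZero, hpow, φprod, Pi.single_apply]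

theorem expectation_φprod_piKronecker {N : ℕ} (M : Fin (N + 1) → Matrix (Fin 2) (Fin 2) ℂ) :
    expectation (φprod N) (piKronecker M) =
      expectation ketZero (M 0) * ∏ i : Fin N, expectation ketPlus (M (per i)) := by
  rw [φprod_eq_prodVec, expectation_prodVec_piKronecker, Fin.prod_univ_succ]
  simp [siteState, per]

theorem per_ne_zero {N : ℕ} (i : Fin N) : per i ≠ 0 := Fin.succ_ne_zero i

theorem perS_ne_zero {N : ℕ} (i : Fin N) : perS i ≠ 0 := by
  simp [perS, Fin.ext_iff]

theorem per_injective {N : ℕ} : Function.Injective (per (N := N)) := Fin.succ_injective N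

theorem val_perS {N : ℕ} (i : Fin N) :
    (perS i : ℕ) = if (i : ℕ) + 1 = N then 1 else (i : ℕ) + 2 := by
  have := i.isLt
  split_ifs with h
  · simp [perS, h]
  · simp [perS, Nat.mod_eq_of_lt (show (i : ℕ) + 1 < N by omega)]

theorem per_ne_perS {N : ℕ} (hN : 2 ≤ N) (i : Fin N) : per i ≠ perS i := by
  rw [Ne, Fin.ext_iff, val_perS, per, Fin.val_succ]
  split_ifs <;> omega

theorem per_ne_perS_of_per_eq_perS {N : ℕ} (hN : 3 ≤ N) {i j : Fin N}
    (h : per i = perS j) : per j ≠ perS i := by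
  rw [Ne, Fin.ext_iff]
  rw [Fin.ext_iff] at h
  simp only [val_perS, per, Fin.val_succ] at h ⊢
  split_ifs at h ⊢ <;> omega

def centralCoupling {N : ℕ} (i : Fin N) : Fin (N + 1) → Matrix (Fin 2) (Fin 2) ℂ :=
  Pi.mulSingle 0 σy * Pi.mulSingle (per i) σx

def ringCoupling {N : ℕ} (i : Fin N) : Fin (N + 1) → Matrix (Fin 2) (Fin 2) ℂ :=
  Pi.mulSingle (per i) σz * Pi.mulSingle (perS i) σz

theorem ringCoupling_mul_self {N : ℕ} (i : Fin N) : ringCoupling i * ringCoupling i = 1 := by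
  rw [ringCoupling, (Pi.mulSingle_apply_commute (fun _ => σz) (perS i) (per i)).mul_mul_mul_comm,
    ← Pi.mulSingle_mul, ← Pi.mulSingle_mul, σz_mul_σz, Pi.mulSingle_one, Pi.mulSingle_one, one_mul]

theorem HC_eq_sum_piKronecker (N : ℕ) :
    HC N = ∑ i, piKronecker (centralCoupling i) + ∑ i, piKronecker (ringCoupling i) := by
  simp only [HC, siteOp_eq_piKronecker, piKronecker_mul]
  rfl

section

variable {N : ℕ}

theorem expectation_centralCoupling (i : Fin N) :
    expectation (φprod N) (piKronecker (centralCoupling i)) = 0 := by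
  simp [expectation_φprod_piKronecker, centralCoupling, (per_ne_zero i).symm]

theorem expectation_ringCoupling (hN : 2 ≤ N) (i : Fin N) :
    expectation (φprod N) (piKronecker (ringCoupling i)) = 0 := by
  rw [expectation_φprod_piKronecker, Finset.prod_eq_zero (Finset.mem_univ i), mul_zero]
  simp [ringCoupling, per_ne_perS hN i]

theorem expectation_centralCoupling_mul_centralCoupling (i j : Fin N) :
    expectation (φprod N)
      (piKronecker (centralCoupling i) * piKronecker (centralCoupling j)) = 1 := by
  rw [piKronecker_mul, expectation_φprod_piKronecker]
  simp [centralCoupling, (per_ne_zero _).symm, Pi.mulSingle_apply,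
    apply_ite (expectation ketPlus)]

theorem expectation_centralCoupling_mul_ringCoupling (i j : Fin N) :
    expectation (φprod N)
      (piKronecker (centralCoupling i) * piKronecker (ringCoupling j)) = 0 := by
  rw [piKronecker_mul, expectation_φprod_piKronecker]
  simp [centralCoupling, ringCoupling, (per_ne_zero _).symm, (perS_ne_zero _).symm]

theorem expectation_ringCoupling_mul_centralCoupling (i j : Fin N) :
    expectation (φprod N)
      (piKronecker (ringCoupling i) * piKronecker (centralCoupling j)) = 0 := by
  rw [piKronecker_mul, expectation_φprod_piKronecker]
  simp [centralCoupling, ringCoupling, (per_ne_zero _).symm, (perS_ne_zero _).symm]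

theorem expectation_ringCoupling_mul_ringCoupling (hN : 3 ≤ N) (i j : Fin N) :
    expectation (φprod N) (piKronecker (ringCoupling i) * piKronecker (ringCoupling j)) =
      if i = j then 1 else 0 := by
  rcases eq_or_ne i j with rfl | hij
  · simp [piKronecker_mul, ← Pi.mul_def, ringCoupling_mul_self, expectation_φprod_piKronecker]
  rw [if_neg hij, piKronecker_mul, expectation_φprod_piKronecker]
  have hN2 : 2 ≤ N := by omega
  have hij' : per i ≠ per j := per_injective.ne hij
  -- some site of one bond lies outside the other bond, and carries a lone `σz`
  by_cases h : per i = perS j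
  · refine mul_eq_zero_of_right _ (Finset.prod_eq_zero (Finset.mem_univ j) ?_)
    simp [ringCoupling, hij'.symm, per_ne_perS_of_per_eq_perS hN h, per_ne_perS hN2]
  · refine mul_eq_zero_of_right _ (Finset.prod_eq_zero (Finset.mem_univ i) ?_)
    simp [ringCoupling, hij', h, per_ne_perS hN2]

end

/-- In the product state `|+z⟩₀ ⊗ |+x⟩^{⊗N}`, the MCS charger
Hamiltonian has vanishing mean and second moment `N² + N`, so its energy
variance equals `N² + N` and scales quadratically with system size. -/
theorem mcs_charger_variance (N : ℕ) (hN : 3 ≤ N) :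
    star (φprod N) ⬝ᵥ ((HC N).mulVec (φprod N)) = 0 ∧
    star (φprod N) ⬝ᵥ (((HC N) * (HC N)).mulVec (φprod N))
      = (N : ℂ) ^ 2 + (N : ℂ) := by
  refine ⟨?mean, ?secondMoment⟩
  case mean =>
    change expectation (φprod N) (HC N) = 0
    simp [HC_eq_sum_piKronecker, expectation_add, expectation_sum, expectation_centralCoupling,
      expectation_ringCoupling (by omega : 2 ≤ N)]
  case secondMoment =>
    change expectation (φprod N) (HC N * HC N) = _
    simp only [HC_eq_sum_piKronecker, add_mul, mul_add, Finset.sum_mul_sum, expectation_add,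
      expectation_sum, expectation_centralCoupling_mul_centralCoupling,
      expectation_centralCoupling_mul_ringCoupling, expectation_ringCoupling_mul_centralCoupling,
      expectation_ringCoupling_mul_ringCoupling hN]
    simp [sq]
end

section
/- (Energy extensivity of the MCS pair.) Fix N ≥ 3 and let H_B and H_C be the MCS battery and charger Hamiltonians on N+1 qubits. Then Real.sqrt (N^2 + N) ≤ ‖H_B‖ ≤ 2 * N and Real.sqrt (N^2 + N) ≤ ‖H_C‖ ≤ 2 * N; in particular both Hamiltonians have operator norm of order Θ(N), i.e. they are energy-extensive, even though their commutator norm grows like N². -/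
/-!
The upper bound is the triangle inequality: each of the `2N` terms is a product of two
single-site Pauli operators, hence unitary of norm `1`.

For the lower bound, with `σ = σx` or `σy` (so `σ 0 0 = 0` and `|σ 1 0| = 1`), apply the
Hamiltonian to `ψ = |0⟩ ⊗ |+⟩^{⊗N}`. The central terms fix the `|+⟩^{⊗N}` factor and send `ψ` to
`N σ|0⟩ ⊗ |+⟩^{⊗N}`, which is orthogonal to `ψ`; the `ZZ` terms multiply each configuration of `ψ`
by its bond sum `T = ∑ᵢ zᵢ zᵢ₊₁` around the `N`-cycle. Hence `‖Hψ‖² / ‖ψ‖² = N² + 𝔼[T²]`, and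
`𝔼[T²] = N` because for `N ≥ 3` distinct bonds are distinct pairs of sites, so the products of
spin signs along two different bonds are uncorrelated.
-/

open scoped Matrix.Norms.L2Operator
open scoped Matrix

theorem norm_sum_le_card_of_mem_unitary {E ι : Type*} [NormedRing E] [StarRing E] [CStarRing E]
    [Nontrivial E] (s : Finset ι) {U : ι → E} (hU : ∀ i ∈ s, U i ∈ unitary E) :
    ‖∑ i ∈ s, U i‖ ≤ s.card := by
  simpa using norm_sum_le_of_le s fun i hi => (CStarRing.norm_of_mem_unitary (hU i hi)).le

theorem sum_pi_fin_succ {α M : Type*} [Fintype α] [AddCommMonoid M] {n : ℕ}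
    (F : (Fin (n + 1) → α) → M) :
    ∑ f, F f = ∑ a, ∑ g : Fin n → α, F (Fin.cons a g) := by
  rw [← (Fin.consEquiv fun _ => α).sum_comp, Fintype.sum_prod_type]
  rfl

theorem le_l2_opNorm_of_mul_norm_le {𝕜 m n : Type*} [RCLike 𝕜] [Fintype m] [Fintype n]
    [DecidableEq n] (A : Matrix m n 𝕜) {x : EuclideanSpace 𝕜 n} (hx : x ≠ 0) {c : ℝ}
    (h : c * ‖x‖ ≤ ‖(EuclideanSpace.equiv m 𝕜).symm (A *ᵥ x)‖) : c ≤ ‖A‖ :=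
  le_of_mul_le_mul_right (h.trans (Matrix.l2_opNorm_mulVec A x)) (norm_pos_iff.2 hx)

section SiteOp

variable {N : ℕ}

theorem siteOp_apply (P : Matrix (Fin 2) (Fin 2) ℂ) (j : Fin (N + 1))
    (f g : Fin (N + 1) → Fin 2) :
    siteOp P j f g = if Function.update f j (g j) = g then P (f j) (g j) else 0 := by
  simp only [siteOp, Finset.prod_boole, Function.update_eq_iff, true_and, Finset.mem_erase,
    Finset.mem_univ, and_true]
  split_ifs <;> simp

theorem siteOp_mulVec (P : Matrix (Fin 2) (Fin 2) ℂ) (j : Fin (N + 1))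
    (u : (Fin (N + 1) → Fin 2) → ℂ) (f : Fin (N + 1) → Fin 2) :
    (siteOp P j *ᵥ u) f = ∑ b, P (f j) b * u (Function.update f j b) := by
  refine (Fintype.sum_of_injective _ (Function.update_injective f j) _ _ ?_ ?_).symm
  · intro g hg
    dsimp only
    rw [siteOp_apply, if_neg fun h => hg ⟨_, h⟩, zero_mul]
  · simp [siteOp_apply]

theorem siteOp_mul (P Q : Matrix (Fin 2) (Fin 2) ℂ) (j : Fin (N + 1)) :
    siteOp P j * siteOp Q j = siteOp (P * Q) j := by
  ext f g
  change (siteOp P j *ᵥ fun h => siteOp Q j h g) f = _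
  simp only [siteOp_mulVec, siteOp_apply, Function.update_idem, Function.update_self,
    mul_ite, mul_zero, Finset.sum_ite_irrel, Finset.sum_const_zero, Matrix.mul_apply]

theorem siteOp_one (j : Fin (N + 1)) : siteOp (1 : Matrix (Fin 2) (Fin 2) ℂ) j = 1 := by
  ext f g
  rw [siteOp_apply]
  by_cases h : f = g
  · subst h; simp
  · rw [Matrix.one_apply_ne h, ite_eq_right_iff]
    intro hu
    refine Matrix.one_apply_ne fun hj => h ?_
    rw [← hu, ← hj, Function.update_eq_self]

theorem siteOp_conjTranspose (P : Matrix (Fin 2) (Fin 2) ℂ) (j : Fin (N + 1)) :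
    (siteOp P j)ᴴ = siteOp Pᴴ j := by
  ext f g
  simp only [Matrix.conjTranspose_apply, siteOp_apply, Function.update_eq_iff, true_and,
    apply_ite star, star_zero, eq_comm (a := f _) (b := g _)]

theorem siteOp_mem_unitary {P : Matrix (Fin 2) (Fin 2) ℂ}
    (hP : P ∈ unitary (Matrix (Fin 2) (Fin 2) ℂ)) (j : Fin (N + 1)) :
    siteOp P j ∈ unitary (Matrix (Fin (N + 1) → Fin 2) (Fin (N + 1) → Fin 2) ℂ) := by
  simp only [Unitary.mem_iff, Matrix.star_eq_conjTranspose, siteOp_conjTranspose,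
    siteOp_mul] at hP ⊢
  simp [hP, siteOp_one]

theorem siteOp_diagonal_mulVec (d : Fin 2 → ℂ) (j : Fin (N + 1))
    (u : (Fin (N + 1) → Fin 2) → ℂ) :
    siteOp (Matrix.diagonal d) j *ᵥ u = fun f => d (f j) * u f := by
  ext f
  simp [siteOp_mulVec, Matrix.diagonal_apply]

theorem siteOp_mulVec_of_update_eq (P : Matrix (Fin 2) (Fin 2) ℂ) (j : Fin (N + 1))
    {u : (Fin (N + 1) → Fin 2) → ℂ} (hu : ∀ f b, u (Function.update f j b) = u f) :
    siteOp P j *ᵥ u = fun f => (∑ b, P (f j) b) * u f := by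
  ext f
  simp [siteOp_mulVec, hu, ← Finset.sum_mul]

end SiteOp

theorem σx_mem_unitary : σx ∈ unitary (Matrix (Fin 2) (Fin 2) ℂ) :=
  Matrix.mem_unitaryGroup_iff.2 <| by
    ext i j; fin_cases i <;> fin_cases j <;> simp [σx, Matrix.mul_apply]

theorem σy_mem_unitary : σy ∈ unitary (Matrix (Fin 2) (Fin 2) ℂ) :=
  Matrix.mem_unitaryGroup_iff.2 <| by
    ext i j; fin_cases i <;> fin_cases j <;> simp [σy, Matrix.mul_apply]

theorem σz_mem_unitary : σz ∈ unitary (Matrix (Fin 2) (Fin 2) ℂ) :=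
  Matrix.mem_unitaryGroup_iff.2 <| by
    ext i j; fin_cases i <;> fin_cases j <;> simp [σz, Matrix.mul_apply]

def zSign : Fin 2 → ℝ := ![1, -1]

theorem zSign_mul_self (b : Fin 2) : zSign b * zSign b = 1 := by
  fin_cases b <;> norm_num [zSign]

theorem zSign_add_one (b : Fin 2) : zSign (b + 1) = -zSign b := by
  fin_cases b <;> simp [zSign]

theorem σz_eq_diagonal : σz = Matrix.diagonal fun b => (zSign b : ℂ) := by
  ext i j; fin_cases i <;> fin_cases j <;> simp [σz, zSign]

theorem sum_σx_row (a : Fin 2) : ∑ b, σx a b = 1 := by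
  fin_cases a <;> simp [σx]

section Spins

variable {ι : Type*} [Fintype ι] [DecidableEq ι]

theorem sum_eq_zero_of_flip_eq_neg (F : (ι → Fin 2) → ℝ) (k : ι)
    (hF : ∀ g, F (Function.update g k (g k + 1)) = -F g) : ∑ g, F g = 0 := by
  have hflip : Function.Involutive fun g : ι → Fin 2 => Function.update g k (g k + 1) := by
    intro g
    simp only [Function.update_self, Function.update_idem, add_assoc, Fin.reduceAdd, add_zero,
      Function.update_eq_self]
  have h := Equiv.sum_comp (hflip.toPerm _) F
  simp only [Function.Involutive.coe_toPerm, hF, Finset.sum_neg_distrib] at h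
  linarith

theorem sum_zSign_mul_eq_zero {a b a' b' : ι} (hb : a ≠ b) (ha' : a ≠ a') (hb' : a ≠ b') :
    ∑ g : ι → Fin 2, zSign (g a) * zSign (g b) * (zSign (g a') * zSign (g b')) = 0 := by
  refine sum_eq_zero_of_flip_eq_neg _ a fun g => ?_
  simp only [Function.update_self, Function.update_of_ne hb.symm, Function.update_of_ne ha'.symm,
    Function.update_of_ne hb'.symm, zSign_add_one]
  ring

theorem sum_zSign_bond_mul_bond_eq_zero {a b a' b' : ι} (hab : a ≠ b)
    (hne : s(a, b) ≠ s(a', b')) :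
    ∑ g : ι → Fin 2, zSign (g a) * zSign (g b) * (zSign (g a') * zSign (g b')) = 0 := by
  -- an endpoint of the first bond outside the second one can be flipped
  by_cases ha : a ≠ a' ∧ a ≠ b'
  · exact sum_zSign_mul_eq_zero hab ha.1 ha.2
  by_cases hb : b ≠ a' ∧ b ≠ b'
  · refine (Finset.sum_congr rfl fun g _ => by ring).trans
      (sum_zSign_mul_eq_zero hab.symm hb.1 hb.2)
  refine absurd ?_ hne
  rw [not_and_or, not_ne_iff, not_ne_iff] at ha hb
  rcases ha with rfl | rfl <;> rcases hb with rfl | rfl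
  · exact (hab rfl).elim
  · rfl
  · exact Sym2.eq_swap
  · exact (hab rfl).elim

theorem sum_sq_sum_zSign_bond {E : Type*} [Fintype E] (a b : E → ι) (hab : ∀ e, a e ≠ b e)
    (hinj : Function.Injective fun e => s(a e, b e)) :
    ∑ g : ι → Fin 2, (∑ e, zSign (g (a e)) * zSign (g (b e))) ^ 2
      = Fintype.card E * 2 ^ Fintype.card ι := by
  classical
  have hdiag : ∀ e e', ∑ g : ι → Fin 2, zSign (g (a e)) * zSign (g (b e))
      * (zSign (g (a e')) * zSign (g (b e'))) = if e = e' then 2 ^ Fintype.card ι else 0 := by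
    intro e e'
    split_ifs with h
    · subst h
      simp [mul_mul_mul_comm, zSign_mul_self]
    · exact sum_zSign_bond_mul_bond_eq_zero (hab e) (hinj.ne h)
  simp only [sq, Finset.sum_mul_sum]
  rw [Finset.sum_comm]
  simp only [Finset.sum_comm (γ := ι → Fin 2), hdiag]
  simp

theorem sum_sq_sum_zSign_cycle {N : ℕ} [NeZero N] (hN : 3 ≤ N) :
    ∑ g : Fin N → Fin 2, (∑ i, zSign (g i) * zSign (g (i + 1))) ^ 2 = N * 2 ^ N := by
  have hone : (1 : Fin N) ≠ 0 := by
    simp only [ne_eq, Fin.ext_iff, Fin.val_one', Fin.val_zero]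
    rw [Nat.mod_eq_of_lt (by omega)]; omega
  have htwo : (1 + 1 : Fin N) ≠ 0 := by
    simp only [ne_eq, Fin.ext_iff, Fin.val_add, Fin.val_one', Fin.val_zero, Nat.add_mod_mod,
      Nat.mod_add_mod]
    rw [Nat.mod_eq_of_lt (by omega)]; omega
  have hinj : Function.Injective fun i : Fin N => s(i, i + 1) := by
    intro i j hij
    rcases Sym2.eq_iff.1 hij with ⟨h, -⟩ | ⟨rfl, h⟩
    · exact h
    · rw [add_assoc] at h
      exact absurd (add_eq_left.1 h) htwo
  simpa using sum_sq_sum_zSign_bond id (· + 1) (fun i h => hone (left_eq_add.1 h)) hinj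

end Spins

section Hamiltonian

variable {N : ℕ}

noncomputable def mcsHamiltonian (N : ℕ) (σ : Matrix (Fin 2) (Fin 2) ℂ) :
    Matrix (Fin (N + 1) → Fin 2) (Fin (N + 1) → Fin 2) ℂ :=
  (∑ i : Fin N, siteOp σ 0 * siteOp σx (per i)) +
  (∑ i : Fin N, siteOp σz (per i) * siteOp σz (perS i))

theorem norm_mcsHamiltonian_le {σ : Matrix (Fin 2) (Fin 2) ℂ}
    (hσ : σ ∈ unitary (Matrix (Fin 2) (Fin 2) ℂ)) : ‖mcsHamiltonian N σ‖ ≤ 2 * N := by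
  have hcentral := norm_sum_le_card_of_mem_unitary (Finset.univ : Finset (Fin N)) fun i _ =>
    mul_mem (siteOp_mem_unitary hσ 0) (siteOp_mem_unitary σx_mem_unitary (per i))
  have hbond := norm_sum_le_card_of_mem_unitary (Finset.univ : Finset (Fin N)) fun i _ =>
    mul_mem (siteOp_mem_unitary σz_mem_unitary (per i))
      (siteOp_mem_unitary σz_mem_unitary (perS i))
  rw [Finset.card_univ, Fintype.card_fin] at hcentral hbond
  calc ‖mcsHamiltonian N σ‖ ≤ N + N := (norm_add_le _ _).trans (add_le_add hcentral hbond)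
    _ = 2 * N := by ring

/-- The product state `|+z⟩₀ ⊗ |+x⟩^{⊗N}`, scaled by `2^{N/2}`. -/
def trialVec (N : ℕ) : (Fin (N + 1) → Fin 2) → ℂ := fun f => if f 0 = 0 then 1 else 0

theorem mcsHamiltonian_mulVec_trialVec (σ : Matrix (Fin 2) (Fin 2) ℂ) :
    mcsHamiltonian N σ *ᵥ trialVec N = fun f => N * σ (f 0) 0
      + ((∑ i : Fin N, zSign (f (per i)) * zSign (f (perS i)) : ℝ) : ℂ) * trialVec N f := by
  have hx : ∀ i, siteOp σx (per i) *ᵥ trialVec N = trialVec N := fun i => by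
    rw [siteOp_mulVec_of_update_eq _ _ fun f b => ?_]
    · simp only [sum_σx_row, one_mul]
    · simp [trialVec, Function.update_of_ne (Fin.succ_ne_zero i).symm, per]
  have hcentral : siteOp σ 0 *ᵥ trialVec N = fun f => σ (f 0) 0 := by
    ext f; simp [siteOp_mulVec, trialVec]
  ext f
  simp [mcsHamiltonian, Matrix.add_mulVec, Matrix.sum_mulVec, ← Matrix.mulVec_mulVec, hx,
    hcentral, σz_eq_diagonal, siteOp_diagonal_mulVec, Finset.sum_mul, mul_assoc]

theorem perS_eq_succ_add_one [NeZero N] (i : Fin N) : perS i = (i + 1).succ := by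
  ext
  simp [perS, Fin.val_add]

theorem norm_trialVec : ‖WithLp.toLp 2 (trialVec N)‖ = √(2 ^ N) := by
  rw [EuclideanSpace.norm_eq, sum_pi_fin_succ]
  simp [trialVec]

theorem norm_mcsHamiltonian_mulVec_trialVec (hN : 3 ≤ N) {σ : Matrix (Fin 2) (Fin 2) ℂ}
    (h00 : σ 0 0 = 0) (h10 : ‖σ 1 0‖ = 1) :
    ‖(EuclideanSpace.equiv _ ℂ).symm (mcsHamiltonian N σ *ᵥ WithLp.toLp 2 (trialVec N))‖
      = √((N ^ 2 + N) * 2 ^ N) := by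
  have : NeZero N := ⟨by omega⟩
  rw [EuclideanSpace.norm_eq, sum_pi_fin_succ]
  congr 1
  simp only [PiLp.continuousLinearEquiv_symm_apply, mcsHamiltonian_mulVec_trialVec, trialVec,
    Fin.sum_univ_two, Fin.cons_zero, Fin.cons_succ, per, perS_eq_succ_add_one, h00, if_pos,
    if_neg one_ne_zero, mul_one, mul_zero, zero_add, add_zero, Complex.norm_real, Real.norm_eq_abs,
    sq_abs, sum_sq_sum_zSign_cycle hN, norm_mul, Complex.norm_natCast, h10, Finset.sum_const,
    Finset.card_univ, Fintype.card_pi, Finset.prod_const, Fintype.card_fin, nsmul_eq_mul,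
    Nat.cast_pow, Nat.cast_ofNat]
  ring

theorem sqrt_le_norm_mcsHamiltonian (hN : 3 ≤ N) {σ : Matrix (Fin 2) (Fin 2) ℂ}
    (h00 : σ 0 0 = 0) (h10 : ‖σ 1 0‖ = 1) : √((N : ℝ) ^ 2 + N) ≤ ‖mcsHamiltonian N σ‖ := by
  refine le_l2_opNorm_of_mul_norm_le _ (x := WithLp.toLp 2 (trialVec N)) ?_ ?_
  · rw [← norm_pos_iff, norm_trialVec]
    positivity
  · rw [norm_mcsHamiltonian_mulVec_trialVec hN h00 h10, norm_trialVec,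
      ← Real.sqrt_mul (by positivity)]

end Hamiltonian

/-- energy extensivity of the MCS pair. Both the MCS battery
and charger Hamiltonians on `N+1` qubits have operator norm between
`√(N² + N)` and `2N`, i.e. they are energy-extensive (`Θ(N)`), even though
their commutator norm grows like `N²`. -/
theorem mcs_energy_extensive (N : ℕ) (hN : 3 ≤ N) :
    (Real.sqrt ((N : ℝ) ^ 2 + N) ≤ ‖HB N‖ ∧ ‖HB N‖ ≤ 2 * (N : ℝ)) ∧
    (Real.sqrt ((N : ℝ) ^ 2 + N) ≤ ‖HC N‖ ∧ ‖HC N‖ ≤ 2 * (N : ℝ)) := by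
  have hx : σx 0 0 = 0 ∧ ‖σx 1 0‖ = 1 := by simp [σx]
  have hy : σy 0 0 = 0 ∧ ‖σy 1 0‖ = 1 := by simp [σy]
  exact ⟨⟨sqrt_le_norm_mcsHamiltonian hN hx.1 hx.2, norm_mcsHamiltonian_le σx_mem_unitary⟩,
    ⟨sqrt_le_norm_mcsHamiltonian hN hy.1 hy.2, norm_mcsHamiltonian_le σy_mem_unitary⟩⟩
end
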